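/- arXiv:2503.23802 — 5 statements merged into one kernel-verified Lean document; each statement's English description precedes it below -/
import Mathlib

section
/- In the total graph T(P_n) (n ≥ 2), the distance between the vertices x_1 and x_n equals n−1, and the diameter of T(P_n) equals n−1. -/
open Function Finset

/-- A single pebbling move: remove 2 pebbles from `u` and place 1 on an adjacent vertex `v`. -/
def PebMove {V : Type*} [DecidableEq V] (G : SimpleGraph V) (D D' : V → ℕ) : Prop :=
  ∃ u v, G.Adj u v ∧ 2 ≤ D u ∧
    D' = update (update D u (D u - 2)) v ((update D u (D u - 2)) v + 1)

/-- `t` pebbles can be delivered to `target` from distribution `D` by a sequence of moves. -/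
def Solvable {V : Type*} [DecidableEq V] (G : SimpleGraph V) (D : V → ℕ) (target : V)
    (t : ℕ) : Prop :=
  ∃ D', Relation.ReflTransGen (PebMove G) D D' ∧ t ≤ D' target

/-- The `t`-pebbling number: least `N` such that every distribution of at least `N` pebbles
can deliver `t` pebbles to any target vertex. -/
noncomputable def piT {V : Type*} [DecidableEq V] [Fintype V] (G : SimpleGraph V) (t : ℕ) : ℕ :=
  sInf {N | ∀ D : V → ℕ, N ≤ ∑ v, D v → ∀ target : V, Solvable G D target t}

/-- Generating relation for the total graph of the path `P n`:
`Sum.inl i` is the vertex `x_{i+1}`, `Sum.inr j` is the edge-vertex `y_{(j+1)(j+2)}`. -/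
def TPRel (n : ℕ) : (Fin n ⊕ Fin (n-1)) → (Fin n ⊕ Fin (n-1)) → Prop
  | Sum.inl i, Sum.inl j => (i:ℕ) + 1 = j
  | Sum.inr i, Sum.inr j => (i:ℕ) + 1 = j
  | Sum.inl i, Sum.inr j => (i:ℕ) = j ∨ (i:ℕ) = (j:ℕ) + 1
  | Sum.inr _, Sum.inl _ => False

/-- The total graph of the path on `n` vertices. -/
def TP (n : ℕ) : SimpleGraph (Fin n ⊕ Fin (n-1)) := SimpleGraph.fromRel (TPRel n)

/-- The number of occupied vertices of a distribution. -/
def occupied {V : Type*} [Fintype V] (D : V → ℕ) : ℕ :=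
  (Finset.univ.filter (fun v => 0 < D v)).card

abbrev fval {n : ℕ} : (Fin n ⊕ Fin (n-1)) → ℕ := Sum.elim (fun i => (i:ℕ)) (fun j => (j:ℕ))

lemma adj_close {n : ℕ} {u v : Fin n ⊕ Fin (n-1)} (h : (TP n).Adj u v) :
    fval u ≤ fval v + 1 ∧ fval v ≤ fval u + 1 := by
  rw [TP, SimpleGraph.fromRel_adj] at h
  obtain ⟨-, h | h⟩ := h <;> rcases u with i | i <;> rcases v with j | j <;>
    simp only [TPRel, fval, Sum.elim_inl, Sum.elim_inr] at h ⊢ <;> omega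

lemma walk_lb {n : ℕ} : ∀ {u v : Fin n ⊕ Fin (n-1)} (p : (TP n).Walk u v),
    fval u ≤ fval v + p.length ∧ fval v ≤ fval u + p.length := by
  intro u v p
  induction p with
  | nil => simp
  | cons h p ih =>
    have := adj_close h
    simp only [SimpleGraph.Walk.length_cons]
    omega

lemma adjL {n i : ℕ} (h : i + 1 < n) :
    (TP n).Adj (Sum.inl ⟨i, by omega⟩) (Sum.inl ⟨i+1, h⟩) := by
  rw [TP, SimpleGraph.fromRel_adj]
  refine ⟨by simp [Fin.ext_iff], Or.inl ?_⟩
  simp [TPRel]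

lemma adjLR {n j : ℕ} (h : j < n - 1) :
    (TP n).Adj (Sum.inl ⟨j, by omega⟩) (Sum.inr ⟨j, h⟩) := by
  rw [TP, SimpleGraph.fromRel_adj]
  exact ⟨by simp, Or.inl (by simp [TPRel])⟩

lemma adjLR' {n j : ℕ} (h : j < n - 1) :
    (TP n).Adj (Sum.inl ⟨j+1, by omega⟩) (Sum.inr ⟨j, h⟩) := by
  rw [TP, SimpleGraph.fromRel_adj]
  exact ⟨by simp, Or.inl (by simp [TPRel])⟩

lemma adjR {n j : ℕ} (h : j + 1 < n - 1) :
    (TP n).Adj (Sum.inr ⟨j, by omega⟩) (Sum.inr ⟨j+1, h⟩) := by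
  rw [TP, SimpleGraph.fromRel_adj]
  refine ⟨by simp [Fin.ext_iff], Or.inl ?_⟩
  simp [TPRel]

lemma edL {n : ℕ} (d : ℕ) : ∀ (i : ℕ) (h : i + d < n),
    (TP n).edist (Sum.inl ⟨i, by omega⟩) (Sum.inl ⟨i+d, h⟩) ≤ d := by
  induction d with
  | zero => intro i h; simp
  | succ d ih =>
    intro i h
    show (TP n).edist (Sum.inl ⟨i, by omega⟩) (Sum.inl ⟨i+d+1, by omega⟩) ≤ ((d+1 : ℕ) : ℕ∞)
    have h1 : (TP n).edist (Sum.inl ⟨i, by omega⟩) (Sum.inl ⟨i+d, by omega⟩) ≤ d :=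
      ih i (by omega)
    have h2 : (TP n).edist (Sum.inl ⟨i+d, by omega⟩) (Sum.inl ⟨i+d+1, by omega⟩) = 1 :=
      SimpleGraph.edist_eq_one_iff_adj.mpr (adjL (by omega))
    have h3 := SimpleGraph.edist_triangle (G := TP n)
      (u := Sum.inl ⟨i, by omega⟩) (v := Sum.inl ⟨i+d, by omega⟩)
      (w := Sum.inl ⟨i+d+1, by omega⟩)
    refine h3.trans ?_
    rw [h2]
    exact (add_le_add_left h1 1).trans_eq (Nat.cast_add_one d).symm

lemma edR {n : ℕ} (d : ℕ) : ∀ (i : ℕ) (h : i + d < n - 1),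
    (TP n).edist (Sum.inr ⟨i, by omega⟩) (Sum.inr ⟨i+d, h⟩) ≤ d := by
  induction d with
  | zero => intro i h; simp
  | succ d ih =>
    intro i h
    show (TP n).edist (Sum.inr ⟨i, by omega⟩) (Sum.inr ⟨i+d+1, by omega⟩) ≤ ((d+1 : ℕ) : ℕ∞)
    have h1 : (TP n).edist (Sum.inr ⟨i, by omega⟩) (Sum.inr ⟨i+d, by omega⟩) ≤ d :=
      ih i (by omega)
    have h2 : (TP n).edist (Sum.inr ⟨i+d, by omega⟩) (Sum.inr ⟨i+d+1, by omega⟩) = 1 :=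
      SimpleGraph.edist_eq_one_iff_adj.mpr (adjR (by omega))
    have h3 := SimpleGraph.edist_triangle (G := TP n)
      (u := Sum.inr ⟨i, by omega⟩) (v := Sum.inr ⟨i+d, by omega⟩)
      (w := Sum.inr ⟨i+d+1, by omega⟩)
    refine h3.trans ?_
    rw [h2]
    exact (add_le_add_left h1 1).trans_eq (Nat.cast_add_one d).symm

lemma edL' {n : ℕ} (i j : Fin n) (hij : (i:ℕ) ≤ (j:ℕ)) :
    (TP n).edist (Sum.inl i) (Sum.inl j) ≤ (((j:ℕ) - (i:ℕ) : ℕ) : ℕ∞) := by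
  obtain ⟨i, hi⟩ := i
  obtain ⟨j, hj⟩ := j
  have hij' : i ≤ j := hij
  have hlt : i + (j - i) < n := by omega
  have e : (⟨j, hj⟩ : Fin n) = ⟨i + (j - i), hlt⟩ := by
    simp only [Fin.mk.injEq]; omega
  show _ ≤ ((j - i : ℕ) : ℕ∞)
  rw [e]
  exact edL (j - i) i hlt

lemma edR' {n : ℕ} (i j : Fin (n-1)) (hij : (i:ℕ) ≤ (j:ℕ)) :
    (TP n).edist (Sum.inr i) (Sum.inr j) ≤ (((j:ℕ) - (i:ℕ) : ℕ) : ℕ∞) := by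
  obtain ⟨i, hi⟩ := i
  obtain ⟨j, hj⟩ := j
  have hij' : i ≤ j := hij
  have hlt : i + (j - i) < n - 1 := by omega
  have e : (⟨j, hj⟩ : Fin (n-1)) = ⟨i + (j - i), hlt⟩ := by
    simp only [Fin.mk.injEq]; omega
  show _ ≤ ((j - i : ℕ) : ℕ∞)
  rw [e]
  exact edR (j - i) i hlt

lemma edist_inl_inr {n : ℕ} (i : Fin n) (j : Fin (n-1)) :
    (TP n).edist (Sum.inl i) (Sum.inr j) ≤ (((n:ℕ) - 1 : ℕ) : ℕ∞) := by
  obtain ⟨i, hi⟩ := i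
  obtain ⟨j, hj⟩ := j
  rcases le_or_gt i j with hij | hij
  · have h1 : (TP n).edist (Sum.inl ⟨i, hi⟩) (Sum.inl ⟨j, by omega⟩) ≤ ((j - i : ℕ) : ℕ∞) :=
      edL' ⟨i, hi⟩ ⟨j, by omega⟩ hij
    have h2 : (TP n).edist (Sum.inl ⟨j, by omega⟩) (Sum.inr ⟨j, hj⟩) = 1 :=
      SimpleGraph.edist_eq_one_iff_adj.mpr (adjLR hj)
    have h3 := SimpleGraph.edist_triangle (G := TP n)
      (u := Sum.inl ⟨i, hi⟩) (v := Sum.inl ⟨j, by omega⟩) (w := Sum.inr ⟨j, hj⟩)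
    refine h3.trans ?_
    rw [h2]
    calc (TP n).edist (Sum.inl ⟨i, hi⟩) (Sum.inl ⟨j, by omega⟩) + 1
        ≤ ((j - i : ℕ) : ℕ∞) + 1 := add_le_add_left h1 1
      _ = ((j - i + 1 : ℕ) : ℕ∞) := (Nat.cast_add_one _).symm
      _ ≤ ((n - 1 : ℕ) : ℕ∞) := Nat.cast_le.mpr (by omega)
  · have h1 : (TP n).edist (Sum.inl ⟨j+1, by omega⟩) (Sum.inl ⟨i, hi⟩)
        ≤ ((i - (j+1) : ℕ) : ℕ∞) := edL' ⟨j+1, by omega⟩ ⟨i, hi⟩ (by simpa using hij)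
    rw [SimpleGraph.edist_comm] at h1
    have h2 : (TP n).edist (Sum.inl ⟨j+1, by omega⟩) (Sum.inr ⟨j, hj⟩) = 1 :=
      SimpleGraph.edist_eq_one_iff_adj.mpr (adjLR' hj)
    have h3 := SimpleGraph.edist_triangle (G := TP n)
      (u := Sum.inl ⟨i, hi⟩) (v := Sum.inl ⟨j+1, by omega⟩) (w := Sum.inr ⟨j, hj⟩)
    refine h3.trans ?_
    rw [h2]
    calc (TP n).edist (Sum.inl ⟨i, hi⟩) (Sum.inl ⟨j+1, by omega⟩) + 1
        ≤ ((i - (j+1) : ℕ) : ℕ∞) + 1 := add_le_add_left h1 1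
      _ = ((i - (j+1) + 1 : ℕ) : ℕ∞) := (Nat.cast_add_one _).symm
      _ ≤ ((n - 1 : ℕ) : ℕ∞) := Nat.cast_le.mpr (by omega)

lemma edist_all {n : ℕ} (u v : Fin n ⊕ Fin (n-1)) :
    (TP n).edist u v ≤ ((n - 1 : ℕ) : ℕ∞) := by
  rcases u with i | i <;> rcases v with j | j
  · rcases le_total (i:ℕ) (j:ℕ) with hij | hij
    · exact (edL' i j hij).trans (Nat.cast_le.mpr (by have := j.isLt; omega))
    · rw [SimpleGraph.edist_comm]
      exact (edL' j i hij).trans (Nat.cast_le.mpr (by have := i.isLt; omega))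
  · exact edist_inl_inr i j
  · rw [SimpleGraph.edist_comm]; exact edist_inl_inr j i
  · rcases le_total (i:ℕ) (j:ℕ) with hij | hij
    · exact (edR' i j hij).trans (Nat.cast_le.mpr (by have := j.isLt; omega))
    · rw [SimpleGraph.edist_comm]
      exact (edR' j i hij).trans (Nat.cast_le.mpr (by have := i.isLt; omega))

lemma edist_x1xn {n : ℕ} (hn : 2 ≤ n) :
    (TP n).edist (Sum.inl ⟨0, by have := hn; omega⟩) (Sum.inl ⟨n-1, by have := hn; omega⟩) = ((n-1 : ℕ) : ℕ∞) := by
  refine le_antisymm ?_ ?_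
  · exact edL' (n := n) ⟨0, by omega⟩ ⟨n-1, by omega⟩ (Nat.zero_le _)
  · by_cases htop : (TP n).edist (Sum.inl ⟨0, by omega⟩) (Sum.inl ⟨n-1, by omega⟩) = ⊤
    · rw [htop]; exact le_top
    · obtain ⟨p, hp⟩ := SimpleGraph.exists_walk_of_edist_ne_top htop
      have hw : n - 1 ≤ 0 + p.length := (walk_lb p).2
      rw [← hp]
      exact Nat.cast_le.mpr (by omega)

/-- In `T(P_n)`, `dist x_1 x_n = n-1`, and `diam T(P_n) = n-1`. -/
theorem stmt2 (n : ℕ) (hn : 2 ≤ n) :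
    (TP n).dist (Sum.inl ⟨0, by omega⟩) (Sum.inl ⟨n-1, by omega⟩) = n - 1 ∧
    (TP n).diam = n - 1 := by
  have hx := edist_x1xn (n := n) hn
  constructor
  · rw [SimpleGraph.dist, hx, ENat.toNat_coe]
  · have hub : (TP n).ediam ≤ ((n-1 : ℕ) : ℕ∞) :=
      SimpleGraph.ediam_le_of_edist_le (fun u v => edist_all u v)
    have hlb : ((n-1 : ℕ) : ℕ∞) ≤ (TP n).ediam := hx ▸ SimpleGraph.edist_le_ediam
    have h : (TP n).ediam = ((n-1 : ℕ) : ℕ∞) := le_antisymm hub hlb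
    rw [SimpleGraph.diam, h, ENat.toNat_coe]
end

section
/- For every vertex u of T(P_n) with target vertex x_a where 2 ≤ a ≤ n−1, the distance d(u, x_a) is at most max(a−1, n−a). -/
open Function Finset

lemma adjxx (n i : ℕ) (h : i + 1 < n) :
    (TP n).Adj (Sum.inl ⟨i, by omega⟩) (Sum.inl ⟨i+1, h⟩) := by
  refine ⟨by simp [Fin.ext_iff], Or.inl ?_⟩
  show (i : ℕ) + 1 = i + 1
  rfl

lemma adjyx1 (n j : ℕ) (hj : j < n - 1) :
    (TP n).Adj (Sum.inr ⟨j, hj⟩) (Sum.inl ⟨j, by omega⟩) :=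
  ⟨by simp, Or.inr (Or.inl rfl)⟩

lemma adjyx2 (n j : ℕ) (hj : j < n - 1) :
    (TP n).Adj (Sum.inr ⟨j, hj⟩) (Sum.inl ⟨j+1, by omega⟩) :=
  ⟨by simp, Or.inr (Or.inr rfl)⟩

def walkR (n : ℕ) : ∀ (m i : ℕ) (h : i + m < n),
    (TP n).Walk (Sum.inl ⟨i, by omega⟩) (Sum.inl ⟨i + m, by omega⟩)
  | 0, _, _ => SimpleGraph.Walk.nil
  | m+1, i, h =>
    SimpleGraph.Walk.cons (adjxx n i (by omega))
      ((walkR n m (i+1) (by omega)).copy rfl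
        (by simp only [Sum.inl.injEq, Fin.mk.injEq]; omega))

lemma walkR_length (n : ℕ) : ∀ (m i : ℕ) (h : i + m < n), (walkR n m i h).length = m := by
  intro m
  induction m with
  | zero => intro i h; rfl
  | succ m ih => intro i h; simp [walkR, ih]

lemma dist_xx (n i j : ℕ) (hi : i < n) (hj : j < n) (hij : i ≤ j) :
    (TP n).dist (Sum.inl ⟨i, hi⟩) (Sum.inl ⟨j, hj⟩) ≤ j - i := by
  have key := SimpleGraph.dist_le ((walkR n (j - i) i (by omega)).copy rfl
    ((by simp only [Sum.inl.injEq, Fin.mk.injEq]; omega) :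
      (Sum.inl ⟨i + (j - i), by omega⟩ : Fin n ⊕ Fin (n-1)) = Sum.inl ⟨j, hj⟩))
  simpa [walkR_length] using key

/-- For every vertex `u` of `T(P_n)` and target `x_a` with `2 ≤ a ≤ n-1`,
`dist u x_a ≤ max (a-1) (n-a)`. -/
theorem stmt3 (n a : ℕ) (ha : 2 ≤ a) (han : a ≤ n - 1) (u : Fin n ⊕ Fin (n-1)) :
    (TP n).dist u (Sum.inl ⟨a-1, by omega⟩) ≤ max (a-1) (n-a) := by
  have hn : 3 ≤ n := by omega
  match u with
  | Sum.inl ⟨i, hi⟩ =>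
    rcases le_or_gt i (a-1) with h | h
    · calc (TP n).dist _ _ ≤ (a-1) - i := dist_xx n i (a-1) hi (by omega) h
        _ ≤ max (a-1) (n-a) := le_trans (by omega) (le_max_left _ _)
    · rw [SimpleGraph.dist_comm]
      calc (TP n).dist _ _ ≤ i - (a-1) := dist_xx n (a-1) i (by omega) hi (by omega)
        _ ≤ max (a-1) (n-a) := le_trans (by omega) (le_max_right _ _)
  | Sum.inr ⟨j, hj⟩ =>
    rcases le_or_gt (a-1) j with h | h
    · have key := SimpleGraph.dist_le
        (SimpleGraph.Walk.cons (adjyx1 n j hj)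
          (((walkR n (j - (a-1)) (a-1) (by omega)).copy rfl
            ((by simp only [Sum.inl.injEq, Fin.mk.injEq]; omega) :
              (Sum.inl ⟨(a-1) + (j - (a-1)), by omega⟩ : Fin n ⊕ Fin (n-1))
                = Sum.inl ⟨j, by omega⟩)).reverse))
      simp only [SimpleGraph.Walk.length_cons, SimpleGraph.Walk.length_reverse,
        SimpleGraph.Walk.length_copy, walkR_length] at key
      exact le_trans key (le_trans (by omega : j - (a-1) + 1 ≤ n - a) (le_max_right (a-1) (n-a)))
    · have key := SimpleGraph.dist_le
        (SimpleGraph.Walk.cons (adjyx2 n j hj)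
          ((walkR n ((a-1) - (j+1)) (j+1) (by omega)).copy rfl
            ((by simp only [Sum.inl.injEq, Fin.mk.injEq]; omega) :
              (Sum.inl ⟨(j+1) + ((a-1) - (j+1)), by omega⟩ : Fin n ⊕ Fin (n-1))
                = Sum.inl ⟨a-1, by omega⟩)))
      simp only [SimpleGraph.Walk.length_cons, SimpleGraph.Walk.length_copy,
        walkR_length] at key
      exact le_trans key (le_trans (by omega : (a-1) - (j+1) + 1 ≤ a - 1) (le_max_left (a-1) (n-a)))
end

section
/- The pebbling number of T(P_3) equals 5. -/
open Function Finset

abbrev VT := Fin 3 ⊕ Fin 2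

instance : DecidableRel (TPRel 3) := fun a b =>
  match a, b with
  | Sum.inl i, Sum.inl j => inferInstanceAs (Decidable ((i:ℕ)+1 = (j:ℕ)))
  | Sum.inr i, Sum.inr j => inferInstanceAs (Decidable ((i:ℕ)+1 = (j:ℕ)))
  | Sum.inl i, Sum.inr j => inferInstanceAs (Decidable ((i:ℕ) = (j:ℕ) ∨ (i:ℕ) = (j:ℕ)+1))
  | Sum.inr _, Sum.inl _ => inferInstanceAs (Decidable False)

instance : DecidableRel (TP 3).Adj := fun u v =>
  decidable_of_iff _ (SimpleGraph.fromRel_adj (TPRel 3) u v).symm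

def adjB : VT → VT → Bool
  | .inl i, .inl j => (i.val+1 == j.val) || (j.val+1 == i.val)
  | .inr i, .inr j => (i.val+1 == j.val) || (j.val+1 == i.val)
  | .inl i, .inr j => (i.val == j.val) || (i.val == j.val+1)
  | .inr j, .inl i => (i.val == j.val) || (i.val == j.val+1)

lemma adjB_iff : ∀ u v : VT, adjB u v = true ↔ (TP 3).Adj u v := by decide

def doMove (D : VT → ℕ) (u v : VT) : VT → ℕ :=
  update (update D u (D u - 2)) v ((update D u (D u - 2)) v + 1)

def vertsT : List VT := [Sum.inl 0, Sum.inl 1, Sum.inl 2, Sum.inr 0, Sum.inr 1]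

lemma mem_vertsT : ∀ x : VT, x ∈ vertsT := by
  intro x
  rcases x with i | i <;> fin_cases i <;> simp [vertsT]

def solv : ℕ → (VT → ℕ) → VT → Bool
  | 0, D, t => decide (0 < D t)
  | fuel+1, D, t => decide (0 < D t) ||
      vertsT.any fun u => vertsT.any fun v =>
        adjB u v && decide (2 ≤ D u) && solv fuel (doMove D u v) t

lemma doMove_eq (D : VT → ℕ) (u v : VT) :
    doMove D u v = update (update D u (D u - 2)) v ((update D u (D u - 2)) v + 1) := rfl

lemma solv_sound : ∀ (fuel : ℕ) (D : VT → ℕ) (t : VT),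
    solv fuel D t = true → Solvable (TP 3) D t 1 := by
  intro fuel
  induction fuel with
  | zero =>
    intro D t h
    exact ⟨D, .refl, of_decide_eq_true h⟩
  | succ f ih =>
    intro D t h
    rw [solv] at h
    simp only [Bool.or_eq_true, List.any_eq_true, Bool.and_eq_true, decide_eq_true_eq] at h
    rcases h with h | ⟨u, _, v, _, ⟨hadj, hu⟩, hs⟩
    · exact ⟨D, .refl, h⟩
    · obtain ⟨D', hD', ht⟩ := ih _ _ hs
      exact ⟨D', .head ⟨u, v, (adjB_iff u v).mp hadj, hu, rfl⟩ hD', ht⟩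

lemma sum_update' (g : VT → ℕ) (a : VT) (b : ℕ) :
    ∑ x, Function.update g a b x + g a = ∑ x, g x + b := by
  classical
  rw [Finset.sum_update_of_mem (Finset.mem_univ a)]
  rw [← Finset.add_sum_erase _ g (Finset.mem_univ a)]
  simp [Finset.sdiff_singleton_eq_erase]
  omega

lemma sum_doMove (D : VT → ℕ) (u v : VT) (huv : u ≠ v) (hu : 2 ≤ D u) :
    ∑ w, doMove D u v w + 1 = ∑ w, D w := by
  have h1 := sum_update' D u (D u - 2)
  set f := Function.update D u (D u - 2) with hf
  have hfv : f v = D v := Function.update_of_ne (Ne.symm huv) _ D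
  have h2 := sum_update' f v (f v + 1)
  have h3 : doMove D u v = Function.update f v (f v + 1) := rfl
  rw [h3]
  omega

lemma solv_complete (D : VT → ℕ) (t : VT) (h : Solvable (TP 3) D t 1) :
    ∀ fuel, ∑ w, D w ≤ fuel → solv fuel D t = true := by
  obtain ⟨D', hchain, ht⟩ := h
  induction hchain using Relation.ReflTransGen.head_induction_on with
  | refl =>
    intro fuel _
    cases fuel with
    | zero => exact decide_eq_true (by omega)
    | succ f =>
      rw [solv]
      simp only [Bool.or_eq_true, decide_eq_true_eq]
      exact Or.inl (by omega)
  | head hstep _ ih =>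
    rename_i a b _
    intro fuel hf
    obtain ⟨u, v, hadj, hu, hb⟩ := hstep
    have hne : u ≠ v := hadj.ne
    have hbm : b = doMove a u v := hb
    have hsum := sum_doMove a u v hne hu
    rw [← hbm] at hsum
    have h2 : D u ≤ ∑ w, a w ∨ True := Or.inr trivial
    have hau : a u ≤ ∑ w, a w :=
      Finset.single_le_sum (fun i _ => Nat.zero_le (a i)) (Finset.mem_univ u)
    cases fuel with
    | zero => omega
    | succ f =>
      rw [solv]
      simp only [Bool.or_eq_true, List.any_eq_true, Bool.and_eq_true, decide_eq_true_eq]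
      refine Or.inr ⟨u, mem_vertsT u, v, mem_vertsT v, ⟨(adjB_iff u v).mpr hadj, hu⟩, ?_⟩
      rw [← hbm]
      exact ih f (by omega)

def mkD (a b c d e : ℕ) : VT → ℕ
  | .inl i => [a,b,c].getD i.val 0
  | .inr j => [d,e].getD j.val 0

lemma key : ∀ a b c d e : Fin 6, (a:ℕ)+(b:ℕ)+(c:ℕ)+(d:ℕ)+(e:ℕ) = 5 →
    ∀ t, solv 4 (mkD a b c d e) t = true := by decide

lemma sum_expand (g : VT → ℕ) :
    ∑ w, g w = g (.inl 0) + g (.inl 1) + g (.inl 2) + g (.inr 0) + g (.inr 1) := by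
  simp [Fintype.sum_sum_type, Fin.sum_univ_three, Fin.sum_univ_two]
  ring

lemma solvable_of_sum5 (D : VT → ℕ) (h5 : ∑ w, D w = 5) (t : VT) :
    Solvable (TP 3) D t 1 := by
  have hb : ∀ w, D w < 6 := by
    intro w
    have := Finset.single_le_sum (fun i _ => Nat.zero_le (D i)) (Finset.mem_univ w)
    omega
  have hDeq : D = mkD (D (.inl 0)) (D (.inl 1)) (D (.inl 2)) (D (.inr 0)) (D (.inr 1)) := by
    funext w
    rcases w with i | j
    · fin_cases i <;> rfl
    · fin_cases j <;> rfl
  have hexp := sum_expand D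
  apply solv_sound 4
  rw [hDeq]
  exact key ⟨D (.inl 0), hb _⟩ ⟨D (.inl 1), hb _⟩ ⟨D (.inl 2), hb _⟩
    ⟨D (.inr 0), hb _⟩ ⟨D (.inr 1), hb _⟩ (by simp; omega) t

lemma chain_mono : ∀ {D D' : VT → ℕ}, Relation.ReflTransGen (PebMove (TP 3)) D D' →
    ∀ E : VT → ℕ, (∀ w, D w ≤ E w) →
    ∃ E', Relation.ReflTransGen (PebMove (TP 3)) E E' ∧ ∀ w, D' w ≤ E' w := by
  intro D D' hchain
  induction hchain using Relation.ReflTransGen.head_induction_on with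
  | refl => exact fun E h => ⟨E, .refl, h⟩
  | head hstep _ ih =>
    rename_i a b _
    intro E h
    obtain ⟨u, v, hadj, hu, hb⟩ := hstep
    have hbm : b = doMove a u v := hb
    have hstepE : PebMove (TP 3) E (doMove E u v) := ⟨u, v, hadj, le_trans hu (h u), rfl⟩
    have hle : ∀ w, b w ≤ doMove E u v w := by
      intro w
      rw [hbm]
      have h1 := h w; have h2 := h u; have h3 := h v
      simp only [doMove, Function.update_apply]
      split_ifs <;> omega
    obtain ⟨E', hc, h'⟩ := ih (doMove E u v) hle
    exact ⟨E', .head hstepE hc, h'⟩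

lemma solvable_mono {D E : VT → ℕ} (h : ∀ w, D w ≤ E w) {t : VT}
    (hs : Solvable (TP 3) D t 1) : Solvable (TP 3) E t 1 := by
  obtain ⟨D', hchain, ht⟩ := hs
  obtain ⟨E', hc, h'⟩ := chain_mono hchain E h
  exact ⟨E', hc, le_trans ht (h' t)⟩

lemma mem5 : ∀ D : VT → ℕ, 5 ≤ ∑ w, D w → ∀ t : VT, Solvable (TP 3) D t 1 := by
  have H : ∀ n, ∀ D : VT → ℕ, ∑ w, D w = n → 5 ≤ n → ∀ t : VT, Solvable (TP 3) D t 1 := by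
    intro n
    induction n with
    | zero => intro D _ h5; omega
    | succ k ih =>
      intro D hD h5 t
      rcases Nat.lt_or_ge k 5 with hk | hk
      · exact solvable_of_sum5 D (by omega) t
      · have hex : ∃ v, 0 < D v := by
          by_contra h0
          push_neg at h0
          have : ∑ w, D w = 0 := Finset.sum_eq_zero (fun w _ => Nat.le_zero.mp (h0 w))
          omega
        obtain ⟨v, hv⟩ := hex
        have hsu := sum_update' D v (D v - 1)
        have hE : ∑ w, Function.update D v (D v - 1) w = k := by omega
        have hmono : ∀ w, Function.update D v (D v - 1) w ≤ D w := by
          intro w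
          rw [Function.update_apply]
          split_ifs with hw
          · subst hw; omega
          · exact le_refl _
        exact solvable_mono hmono (ih _ hE (by omega) t)
  intro D hD t
  exact H (∑ w, D w) D rfl hD t

def badD : VT → ℕ := mkD 0 0 1 0 3

lemma bad_not : ¬ Solvable (TP 3) badD (Sum.inl 0) 1 := by
  intro h
  have hs := solv_complete badD (Sum.inl 0) h 4 (by decide)
  have : solv 4 badD (Sum.inl 0) = false := by decide
  rw [this] at hs
  exact Bool.false_ne_true hs


/-- `π(T(P_3)) = 5`. -/
theorem stmt6 : piT (TP 3) 1 = 5 := by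
  have h5 : (5:ℕ) ∈ {N | ∀ D : VT → ℕ, N ≤ ∑ v, D v → ∀ target : VT, Solvable (TP 3) D target 1} :=
    fun D hD target => mem5 D hD target
  apply le_antisymm
  · exact Nat.sInf_le h5
  · apply le_csInf ⟨5, h5⟩
    intro N hN
    by_contra hlt
    push_neg at hlt
    have hbad : (4:ℕ) = ∑ w, badD w := by decide
    have := hN badD (by omega) (Sum.inl 0)
    exact bad_not this
end

section
/- The complete graph K_3 satisfies the 2t-pebbling property for every positive integer t, where π_t(K_3) = 2t + 1. -/
open Function Finset

def wt3 (D : Fin 3 → ℕ) (tg : Fin 3) : ℕ :=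
  ∑ v, (if v = tg then D v else D v / 2)

lemma wt3_mono {D D' : Fin 3 → ℕ} (h : PebMove (⊤ : SimpleGraph (Fin 3)) D D')
    (tg : Fin 3) : wt3 D' tg ≤ wt3 D tg := by
  obtain ⟨u, v, hadj, h2, rfl⟩ := h
  rw [SimpleGraph.top_adj] at hadj
  fin_cases u <;> fin_cases v <;> fin_cases tg <;>
    simp_all [wt3, Fin.sum_univ_three, Function.update_apply] <;> omega

lemma solvA : ∀ (n : ℕ) (D : Fin 3 → ℕ) (tg : Fin 3), ∑ v, D v ≤ n →
    Solvable (⊤ : SimpleGraph (Fin 3)) D tg (wt3 D tg) := by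
  intro n
  induction n with
  | zero =>
    intro D tg hs
    refine ⟨D, Relation.ReflTransGen.refl, ?_⟩
    fin_cases tg <;> simp [wt3, Fin.sum_univ_three] at hs ⊢ <;> omega
  | succ n ih =>
    intro D tg hs
    by_cases h : ∃ u, u ≠ tg ∧ 2 ≤ D u
    · obtain ⟨u, hu, h2⟩ := h
      set D₁ := update (update D u (D u - 2)) tg ((update D u (D u - 2)) tg + 1) with hD₁
      have hmove : PebMove (⊤ : SimpleGraph (Fin 3)) D D₁ :=
        ⟨u, tg, by simp [hu], h2, rfl⟩
      have hkey : wt3 D tg ≤ wt3 D₁ tg ∧ (∑ v, D₁ v) + 1 ≤ ∑ v, D v := by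
        fin_cases u <;> fin_cases tg <;>
          simp_all [wt3, Fin.sum_univ_three, Function.update_apply, hD₁] <;> omega
      obtain ⟨D', hR, hle⟩ := ih D₁ tg (by omega)
      exact ⟨D', Relation.ReflTransGen.head hmove hR, by omega⟩
    · push_neg at h
      refine ⟨D, Relation.ReflTransGen.refl, ?_⟩
      fin_cases tg
      · have a := h 1 (by decide); have b := h 2 (by decide)
        simp [wt3, Fin.sum_univ_three]; omega
      · have a := h 0 (by decide); have b := h 2 (by decide)
        simp [wt3, Fin.sum_univ_three]; omega
      · have a := h 0 (by decide); have b := h 1 (by decide)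
        simp [wt3, Fin.sum_univ_three]; omega

lemma wt3_chain {D D' : Fin 3 → ℕ}
    (h : Relation.ReflTransGen (PebMove (⊤ : SimpleGraph (Fin 3))) D D') (tg : Fin 3) :
    wt3 D' tg ≤ wt3 D tg := by
  induction h with
  | refl => exact le_refl _
  | tail _ hstep ih => exact le_trans (wt3_mono hstep tg) ih

lemma solv_iff (D : Fin 3 → ℕ) (tg : Fin 3) (k : ℕ) :
    Solvable (⊤ : SimpleGraph (Fin 3)) D tg k ↔ k ≤ wt3 D tg := by
  constructor
  · rintro ⟨D', hR, hk⟩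
    have h1 : wt3 D' tg ≤ wt3 D tg := wt3_chain hR tg
    have h2 : D' tg ≤ wt3 D' tg := by
      fin_cases tg <;> simp [wt3, Fin.sum_univ_three] <;> omega
    omega
  · intro hk
    obtain ⟨D', hR, hle⟩ := solvA (∑ v, D v) D tg le_rfl
    exact ⟨D', hR, by omega⟩


/-- `K_3` has `π_t(K_3) = 2t+1` and satisfies the `2t`-pebbling property for every `t ≥ 1`. -/
theorem stmt13 (t : ℕ) (ht : 1 ≤ t) :
    piT (⊤ : SimpleGraph (Fin 3)) t = 2*t + 1 ∧
    ∀ D : Fin 3 → ℕ, 2*(2*t + 1) - occupied D + 1 ≤ ∑ v, D v →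
      ∀ target : Fin 3, Solvable (⊤ : SimpleGraph (Fin 3)) D target (2*t) := by
  have hmem : (2*t+1) ∈ {N | ∀ D : Fin 3 → ℕ, N ≤ ∑ v, D v →
      ∀ target : Fin 3, Solvable (⊤ : SimpleGraph (Fin 3)) D target t} := by
    intro D hD tg
    rw [solv_iff]
    rw [Fin.sum_univ_three] at hD
    fin_cases tg <;> simp [wt3, Fin.sum_univ_three] <;> omega
  constructor
  · refine le_antisymm (Nat.sInf_le hmem) (le_csInf ⟨_, hmem⟩ ?_)
    intro N hN
    by_contra hlt
    push_neg at hlt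
    have hs := hN ![0, 2*t-1, 1]
      (by simp [Fin.sum_univ_three]; omega) 0
    rw [solv_iff] at hs
    simp [wt3, Fin.sum_univ_three] at hs
    omega
  · intro D hsum tg
    rw [solv_iff]
    have hocc : occupied D = (if 0 < D 0 then 1 else 0) + (if 0 < D 1 then 1 else 0)
        + (if 0 < D 2 then 1 else 0) := by
      unfold occupied
      rw [Finset.card_filter, Fin.sum_univ_three]
    rw [hocc, Fin.sum_univ_three] at hsum
    fin_cases tg <;> simp [wt3, Fin.sum_univ_three] <;> split_ifs at hsum <;> omega
end

section
/- For the t-pebbling number of the complete graph, π_t(K_m) = 2t + m − 2 for m ≥ 2 and t ≥ 1. -/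
open Function Finset

lemma stmt18_sum_update {V : Type*} [Fintype V] [DecidableEq V] (f : V → ℕ) (a : V) (b : ℕ) :
    (∑ v, update f a b v) + f a = (∑ v, f v) + b := by
  rw [Finset.sum_update_of_mem (Finset.mem_univ a),
    ← Finset.add_sum_erase _ f (Finset.mem_univ a), Finset.erase_eq]
  ring

lemma stmt18_wt_mono {V : Type*} [Fintype V] [DecidableEq V] (target : V) {D D' : V → ℕ}
    (h : PebMove (⊤ : SimpleGraph V) D D') :
    (∑ x, if x = target then D' x else D' x / 2) ≤ ∑ x, if x = target then D x else D x / 2 := by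
  obtain ⟨u, v, hadj, h2, rfl⟩ := h
  have huv : u ≠ v := hadj.ne
  have hsplit : ∀ E : V → ℕ, (∑ x, if x = target then E x else E x / 2)
      = (if u = target then E u else E u / 2) + ((if v = target then E v else E v / 2)
        + ∑ x ∈ (univ.erase u).erase v, (if x = target then E x else E x / 2)) := by
    intro E
    rw [← Finset.add_sum_erase _ _ (Finset.mem_univ u),
        ← Finset.add_sum_erase _ _ (Finset.mem_erase.mpr ⟨huv.symm, Finset.mem_univ v⟩)]
  have hu' : update (update D u (D u - 2)) v (update D u (D u - 2) v + 1) u = D u - 2 := by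
    rw [update_of_ne huv, update_self]
  have hv' : update (update D u (D u - 2)) v (update D u (D u - 2) v + 1) v = D v + 1 := by
    rw [update_self, update_of_ne huv.symm]
  rw [hsplit, hsplit, hu', hv']
  have hS : ∑ x ∈ (univ.erase u).erase v,
      (if x = target then update (update D u (D u - 2)) v (update D u (D u - 2) v + 1) x
       else update (update D u (D u - 2)) v (update D u (D u - 2) v + 1) x / 2)
      = ∑ x ∈ (univ.erase u).erase v, (if x = target then D x else D x / 2) := by
    apply Finset.sum_congr rfl
    intro x hx
    obtain ⟨hxv, hx2⟩ := Finset.mem_erase.mp hx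
    obtain ⟨hxu, -⟩ := Finset.mem_erase.mp hx2
    rw [update_of_ne hxv, update_of_ne hxu]
  rw [hS]
  split_ifs with h1 hb h3
  · exact absurd (h1.trans hb.symm) huv
  all_goals omega

lemma stmt18_wt_rtg {V : Type*} [Fintype V] [DecidableEq V] (target : V) {D D' : V → ℕ}
    (h : Relation.ReflTransGen (PebMove (⊤ : SimpleGraph V)) D D') :
    (∑ x, if x = target then D' x else D' x / 2) ≤ ∑ x, if x = target then D x else D x / 2 := by
  induction h with
  | refl => exact le_rfl
  | tail _ hbc ih => exact le_trans (stmt18_wt_mono target hbc) ih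

lemma stmt18_solve (m t : ℕ) (target : Fin m) :
    ∀ k (D : Fin m → ℕ), t - D target ≤ k → 2*t + m - 2 ≤ (∑ v, D v) + D target →
    Solvable (⊤ : SimpleGraph (Fin m)) D target t := by
  intro k
  induction k with
  | zero => exact fun D hk _ => ⟨D, .refl, by omega⟩
  | succ k ih =>
    intro D hk hsum
    by_cases hDt : t ≤ D target
    · exact ⟨D, .refl, hDt⟩
    push_neg at hDt
    have hex : ∃ u, u ≠ target ∧ 2 ≤ D u := by
      by_contra hno
      push_neg at hno
      have hb : ∑ v ∈ univ.erase target, D v ≤ (univ.erase target).card * 1 := by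
        apply Finset.sum_le_card_nsmul
        intro x hx
        have := hno x (Finset.mem_erase.mp hx).1
        omega
      have h1 : D target + ∑ v ∈ univ.erase target, D v = ∑ v, D v :=
        Finset.add_sum_erase _ _ (Finset.mem_univ target)
      have hc : (univ.erase target).card = m - 1 := by
        rw [Finset.card_erase_of_mem (Finset.mem_univ target), Finset.card_univ,
          Fintype.card_fin]
      rw [hc] at hb
      have hm1 : 0 < m := target.pos
      omega
    obtain ⟨u, hu, h2⟩ := hex
    have hadj : (⊤ : SimpleGraph (Fin m)).Adj u target := by simpa using hu
    have hmove : PebMove (⊤ : SimpleGraph (Fin m)) D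
        (update (update D u (D u - 2)) target (update D u (D u - 2) target + 1)) :=
      ⟨u, target, hadj, h2, rfl⟩
    have hta : update D u (D u - 2) target = D target := update_of_ne hu.symm _ _
    have hDt' : update (update D u (D u - 2)) target (update D u (D u - 2) target + 1) target
        = D target + 1 := by rw [update_self, hta]
    have hs1 : (∑ v, update D u (D u - 2) v) + D u = (∑ v, D v) + (D u - 2) :=
      stmt18_sum_update D u _
    have hs2 := stmt18_sum_update (update D u (D u - 2)) target
      (update D u (D u - 2) target + 1)
    rw [hta] at hs2
    have hle : D u ≤ ∑ v, D v := Finset.single_le_sum (fun i _ => Nat.zero_le _)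
      (Finset.mem_univ u)
    obtain ⟨D', hsteps, hfin⟩ := ih (update (update D u (D u - 2)) target
      (update D u (D u - 2) target + 1)) (by simp only [hta, update_self]; omega)
      (by simp only [hta, update_self]; omega)
    exact ⟨D', .head hmove hsteps, hfin⟩

theorem stmt18_aux (m t : ℕ) (hm : 2 ≤ m) (ht : 1 ≤ t) :
    piT (⊤ : SimpleGraph (Fin m)) t = 2*t + m - 2 := by
  have hmem : (2*t + m - 2) ∈ {N | ∀ D : Fin m → ℕ, N ≤ ∑ v, D v →
      ∀ target : Fin m, Solvable (⊤ : SimpleGraph (Fin m)) D target t} := by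
    intro D hD target
    exact stmt18_solve m t target t D (Nat.sub_le _ _) (by omega)
  have hlb : ∀ N ∈ {N | ∀ D : Fin m → ℕ, N ≤ ∑ v, D v →
      ∀ target : Fin m, Solvable (⊤ : SimpleGraph (Fin m)) D target t}, 2*t + m - 2 ≤ N := by
    intro N hN
    by_contra hlt
    push_neg at hlt
    set z : Fin m := ⟨0, by omega⟩ with hz
    set o : Fin m := ⟨1, by omega⟩ with ho
    have hzo : z ≠ o := by simp [hz, ho, Fin.ext_iff]
    set D : Fin m → ℕ := fun v => if v = z then 0 else if v = o then 2*t - 1 else 1 with hD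
    have hDz : D z = 0 := if_pos rfl
    have hDo : D o = 2*t - 1 := by rw [hD]; simp [hzo.symm]
    have hDx : ∀ x, x ≠ z → x ≠ o → D x = 1 := by
      intro x hxz hxo; rw [hD]; simp [hxz, hxo]
    have hoz : o ∈ univ.erase z := Finset.mem_erase.mpr ⟨hzo.symm, Finset.mem_univ o⟩
    have hcard : ((univ.erase z).erase o).card = m - 2 := by
      rw [Finset.card_erase_of_mem hoz, Finset.card_erase_of_mem (Finset.mem_univ z),
        Finset.card_univ, Fintype.card_fin]
      omega
    have hrest : ∀ (g : Fin m → ℕ), (∀ x, x ≠ z → x ≠ o → g x = 1) →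
        ∑ x ∈ (univ.erase z).erase o, g x = m - 2 := by
      intro g hg
      rw [← hcard]
      rw [Finset.card_eq_sum_ones]
      apply Finset.sum_congr rfl
      intro x hx
      obtain ⟨hxo, hx2⟩ := Finset.mem_erase.mp hx
      exact hg x (Finset.mem_erase.mp hx2).1 hxo
    have hsum : ∑ v, D v = 2*t + m - 3 := by
      rw [← Finset.add_sum_erase _ D (Finset.mem_univ z), ← Finset.add_sum_erase _ D hoz,
        hDz, hDo, hrest D hDx]
      omega
    obtain ⟨D', hsteps, hfin⟩ := hN D (by omega) z
    have hw := stmt18_wt_rtg z hsteps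
    have hwD : (∑ x, if x = z then D x else D x / 2) = t - 1 := by
      rw [← Finset.add_sum_erase _ _ (Finset.mem_univ z), ← Finset.add_sum_erase _ _ hoz,
        if_pos rfl, if_neg hzo.symm, hDz, hDo]
      have hz0 : ∑ x ∈ (univ.erase z).erase o, (if x = z then D x else D x / 2) = 0 := by
        apply Finset.sum_eq_zero
        intro x hx
        obtain ⟨hxo, hx2⟩ := Finset.mem_erase.mp hx
        have hxz := (Finset.mem_erase.mp hx2).1
        rw [if_neg hxz, hDx x hxz hxo]
        rfl
      rw [hz0]
      omega
    have hwD' : D' z ≤ ∑ x, if x = z then D' x else D' x / 2 := by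
      rw [← Finset.add_sum_erase _ _ (Finset.mem_univ z), if_pos rfl]
      exact Nat.le_add_right _ _
    omega
  have hS : {N | ∀ D : Fin m → ℕ, N ≤ ∑ v, D v →
      ∀ target : Fin m, Solvable (⊤ : SimpleGraph (Fin m)) D target t}.Nonempty := ⟨_, hmem⟩
  rw [piT]
  exact le_antisymm (Nat.sInf_le hmem) (hlb _ (Nat.sInf_mem hS))

/-- `π_t(K_m) = 2t + m - 2` for `m ≥ 2` and `t ≥ 1`. -/
theorem stmt18 (m t : ℕ) (hm : 2 ≤ m) (ht : 1 ≤ t) :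
    piT (⊤ : SimpleGraph (Fin m)) t = 2*t + m - 2 := stmt18_aux m t hm ht
end
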